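/- arXiv:1810.00255 — 4 statements merged into one kernel-verified Lean document; each statement's English description precedes it below -/
import Mathlib

section
/- A linear order L admits an order embedding into (P(ℕ), ⊆) if and only if L has a countable separating subset, that is, a countable set S ⊆ L such that for all x < y in L there exists s ∈ S with x ≤ s < y or x < s ≤ y. -/
/-- A linear order `L` order-embeds into `(P(ℕ), ⊆)` iff `L` has a countable
separating subset, i.e. a countable `S ⊆ L` such that for all `x < y` there is `s ∈ S` with
`x ≤ s < y` or `x < s ≤ y`. -/
theorem stmt_9 (L : Type) [LinearOrder L] :
    (∃ f : L → Set ℕ, ∀ a b : L, a ≤ b ↔ f a ⊆ f b) ↔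
      (∃ S : Set L, S.Countable ∧
        ∀ x y : L, x < y → ∃ s ∈ S, (x ≤ s ∧ s < y) ∨ (x < s ∧ s ≤ y)) := by
  classical
  constructor
  · rintro ⟨f, hf⟩
    -- embed into ℝ via a "measure" of sets of naturals
    set c : ℕ → ℝ := fun n => (2 : ℝ)⁻¹ ^ n with hc_def
    have hcpos : ∀ n, 0 < c n := fun n => by positivity
    have hcs : Summable c := summable_geometric_of_lt_one (by norm_num) (by norm_num)
    have hsum : ∀ A : Set ℕ, Summable (A.indicator c) := fun A => hcs.indicator A
    set g : L → ℝ := fun a => ∑' n, (f a).indicator c n with hg_def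
    have hmono : StrictMono g := by
      intro a b hab
      have hsub : f a ⊆ f b := (hf a b).1 hab.le
      have hne : ¬ f b ⊆ f a := fun h => absurd ((hf b a).2 h) (not_le.2 hab)
      obtain ⟨n, hnb, hna⟩ := Set.not_subset.1 hne
      refine Summable.tsum_lt_tsum_of_nonneg (i := n)
        (fun m => Set.indicator_nonneg (fun m _ => (hcpos m).le) m)
        (fun m => Set.indicator_le_indicator_of_subset hsub (fun m => (hcpos m).le) m)
        ?_ (hsum _)
      rw [Set.indicator_of_notMem hna, Set.indicator_of_mem hnb]
      exact hcpos n
    -- the separating set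
    set A : ℚ → Set L := fun q => {x | g x < (q : ℝ) ∧ ∀ z, x < z → (q : ℝ) < g z} with hA_def
    set W : ℚ → ℚ → Set L := fun p q =>
      if h : ∃ s, (p : ℝ) < g s ∧ g s < (q : ℝ) then {h.choose} else ∅ with hW_def
    refine ⟨(⋃ q, A q) ∪ ⋃ p, ⋃ q, W p q, ?_, ?_⟩
    · refine Set.Countable.union (Set.countable_iUnion fun q => ?_)
        (Set.countable_iUnion fun p => Set.countable_iUnion fun q => ?_)
      · -- each A q is a subsingleton
        refine Set.Subsingleton.countable ?_
        rintro x ⟨hx1, hx2⟩ y ⟨hy1, hy2⟩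
        by_contra hxy
        rcases lt_or_gt_of_ne hxy with h | h
        · exact absurd (hx2 y h) (not_lt.2 hy1.le)
        · exact absurd (hy2 x h) (not_lt.2 hx1.le)
      · by_cases h : ∃ s, (p : ℝ) < g s ∧ g s < (q : ℝ)
        · have hW : W p q = {h.choose} := dif_pos h
          rw [hW]; exact Set.countable_singleton _
        · have hW : W p q = ∅ := dif_neg h
          rw [hW]; exact Set.countable_empty
    · intro x y hxy
      by_cases hz : ∃ z, x < z ∧ z < y
      · obtain ⟨z, hxz, hzy⟩ := hz
        obtain ⟨p, hp1, hp2⟩ := exists_rat_btwn (hmono hxz)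
        obtain ⟨q, hq1, hq2⟩ := exists_rat_btwn (hmono hzy)
        have hex : ∃ s, (p : ℝ) < g s ∧ g s < (q : ℝ) := ⟨z, hp2, hq1⟩
        set s := hex.choose with hs_def
        obtain ⟨hsp, hsq⟩ := hex.choose_spec
        have hsW : s ∈ W p q := by
          have hW : W p q = {hex.choose} := dif_pos hex
          rw [hW]; exact rfl
        refine ⟨s, Or.inr (Set.mem_iUnion.2 ⟨p, Set.mem_iUnion.2 ⟨q, hsW⟩⟩),
          Or.inr ⟨?_, le_of_lt ?_⟩⟩
        · exact hmono.lt_iff_lt.1 (hp1.trans hsp)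
        · exact hmono.lt_iff_lt.1 (hsq.trans hq2)
      · push_neg at hz
        obtain ⟨q, hq1, hq2⟩ := exists_rat_btwn (hmono hxy)
        have hxA : x ∈ A q := by
          refine ⟨hq1, fun z hz' => ?_⟩
          exact hq2.trans_le (hmono.monotone (hz z hz'))
        exact ⟨x, Or.inl (Set.mem_iUnion.2 ⟨q, hxA⟩), Or.inl ⟨le_rfl, hxy⟩⟩
  · rintro ⟨S, hS, hsep⟩
    rcases S.eq_empty_or_nonempty with hSe | hSe
    · refine ⟨fun _ => ∅, fun a b => iff_of_true ?_ (subset_refl _)⟩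
      by_contra h
      obtain ⟨s, hs, -⟩ := hsep b a (not_le.1 h)
      simp [hSe] at hs
    · obtain ⟨e, he⟩ := hS.exists_eq_range hSe
      refine ⟨fun a => {m | (Even m ∧ e (m / 2) ≤ a) ∨ (¬ Even m ∧ e (m / 2) < a)},
        fun a b => ⟨fun hab m hm => ?_, fun h => ?_⟩⟩
      · rcases hm with ⟨h1, h2⟩ | ⟨h1, h2⟩
        · exact Or.inl ⟨h1, h2.trans hab⟩
        · exact Or.inr ⟨h1, h2.trans_le hab⟩
      · by_contra hab
        obtain ⟨s, hs, hcase⟩ := hsep b a (not_le.1 hab)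
        rw [he] at hs
        obtain ⟨n, rfl⟩ := hs
        rcases hcase with ⟨h1, h2⟩ | ⟨h1, h2⟩
        · -- b ≤ e n < a : use odd index 2n+1
          have hmem : (2 * n + 1) ∈ {m | (Even m ∧ e (m / 2) ≤ a) ∨ (¬ Even m ∧ e (m / 2) < a)} := by
            refine Or.inr ⟨by simp [Nat.even_iff, Nat.add_mod], ?_⟩
            have : (2 * n + 1) / 2 = n := by omega
            rw [this]; exact h2
          have := h hmem
          rcases this with ⟨h3, -⟩ | ⟨-, h4⟩
          · exact absurd h3 (by simp [Nat.even_iff, Nat.add_mod])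
          · have : (2 * n + 1) / 2 = n := by omega
            rw [this] at h4
            exact absurd h4 (not_lt.2 h1)
        · -- b < e n ≤ a : use even index 2n
          have hmem : (2 * n) ∈ {m | (Even m ∧ e (m / 2) ≤ a) ∨ (¬ Even m ∧ e (m / 2) < a)} := by
            refine Or.inl ⟨⟨n, by ring⟩, ?_⟩
            have : (2 * n) / 2 = n := by omega
            rw [this]; exact h2
          have := h hmem
          rcases this with ⟨-, h3⟩ | ⟨h4, -⟩
          · have : (2 * n) / 2 = n := by omega
            rw [this] at h3
            exact absurd h3 (not_le.2 h1)
          · exact absurd ⟨n, by ring⟩ h4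
end

section
/- Every commutative C*-algebra A admits an injective *-homomorphism into C(Y, ℂ) for some compact Hausdorff totally disconnected topological space Y, where C(Y, ℂ) is the C*-algebra of continuous complex-valued functions on Y. -/
open scoped CStarAlgebra in
/-- Every commutative C*-algebra `A` admits an injective *-homomorphism
into `C(Y, ℂ)` for some compact Hausdorff totally disconnected space `Y`. -/
theorem stmt_10 {A : Type} [NonUnitalNormedRing A] [StarRing A] [CStarRing A]
    [NormedSpace ℂ A] [IsScalarTower ℂ A A] [SMulCommClass ℂ A A] [StarModule ℂ A]
    [CompleteSpace A] (hcomm : ∀ a b : A, a * b = b * a) :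
    ∃ (Y : Type) (_ : TopologicalSpace Y) (_ : CompactSpace Y) (_ : T2Space Y)
      (_ : TotallyDisconnectedSpace Y),
      ∃ f : A →⋆ₙₐ[ℂ] C(Y, ℂ), Function.Injective f := by
  letI : NonUnitalCStarAlgebra A := {}
  letI : NonUnitalCommCStarAlgebra A := { mul_comm := hcomm }
  set B := Unitization ℂ A
  set X := WeakDual.characterSpace ℂ B with hX
  -- Stone–Čech compactification of `X` with the discrete topology is totally disconnected
  refine ⟨Ultrafilter X, inferInstance, inferInstance, inferInstance, inferInstance, ?_⟩
  have hπc : Continuous (Ultrafilter.extend (id : X → X)) := continuous_ultrafilter_extend _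
  have hπs : Function.Surjective (Ultrafilter.extend (id : X → X)) := fun x =>
    ⟨pure x, congrFun (ultrafilter_extend_extends (id : X → X)) x⟩
  let π : C(Ultrafilter X, X) := ⟨_, hπc⟩
  refine ⟨((π.compStarAlgHom' ℂ ℂ).comp
      (gelfandStarTransform B : B →⋆ₐ[ℂ] _)).toNonUnitalStarAlgHom.comp
      (Unitization.inrNonUnitalStarAlgHom ℂ A), ?_⟩
  intro a b h
  apply Unitization.inr_injective (R := ℂ)
  apply (gelfandStarTransform B).injective
  ext x
  obtain ⟨y, rfl⟩ := hπs x
  exact ContinuousMap.congr_fun h y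
end

section
/- Let P be a partially ordered set with property K and let Q be a partially ordered set satisfying the countable chain condition. Then the product P × Q, ordered coordinatewise, satisfies the countable chain condition. -/
/-- If `P` has property K (every uncountable subset has an uncountable
pairwise-compatible subset) and `Q` satisfies the countable chain condition (every antichain
is countable), then the coordinatewise product order `P × Q` satisfies the countable chain
condition. -/
theorem stmt_14 {P Q : Type} [PartialOrder P] [PartialOrder Q]
    (hK : ∀ A : Set P, ¬ A.Countable →
      ∃ B ⊆ A, ¬ B.Countable ∧ ∀ p ∈ B, ∀ q ∈ B, ∃ r : P, r ≤ p ∧ r ≤ q)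
    (hccc : ∀ A : Set Q,
      (∀ p ∈ A, ∀ q ∈ A, p ≠ q → ¬ ∃ r : Q, r ≤ p ∧ r ≤ q) → A.Countable) :
    ∀ A : Set (P × Q),
      (∀ p ∈ A, ∀ q ∈ A, p ≠ q → ¬ ∃ r : P × Q, r ≤ p ∧ r ≤ q) → A.Countable := by
  classical
  intro A hA
  by_contra hAc
  -- each fiber of the first projection is countable
  have hfib : ∀ p : P, ({x ∈ A | x.1 = p}).Countable := by
    intro p
    have himg : (Prod.snd '' {x ∈ A | x.1 = p}).Countable := by
      apply hccc
      rintro q1 ⟨x1, ⟨hx1A, hx1p⟩, rfl⟩ q2 ⟨x2, ⟨hx2A, hx2p⟩, rfl⟩ hne ⟨r, hr1, hr2⟩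
      have hxne : x1 ≠ x2 := fun h => hne (by rw [h])
      exact hA x1 hx1A x2 hx2A hxne
        ⟨(p, r), ⟨hx1p.ge, hr1⟩, ⟨hx2p.ge, hr2⟩⟩
    refine Set.countable_of_injective_of_countable_image ?_ himg
    rintro x1 ⟨hx1A, hx1p⟩ x2 ⟨hx2A, hx2p⟩ h
    exact Prod.ext (hx1p.trans hx2p.symm) h
  -- hence the image of the first projection is uncountable
  have hfst : ¬ (Prod.fst '' A).Countable := by
    intro hc
    apply hAc
    have : A ⊆ ⋃ p ∈ Prod.fst '' A, {x ∈ A | x.1 = p} := by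
      intro x hx
      exact Set.mem_biUnion ⟨x, hx, rfl⟩ ⟨hx, rfl⟩
    exact (hc.biUnion fun p _ => hfib p).mono this
  obtain ⟨B, hBsub, hBc, hBcompat⟩ := hK _ hfst
  -- choose for each p ∈ B a witness in A
  have hwit : ∀ p ∈ B, ∃ q : Q, (p, q) ∈ A := by
    intro p hp
    obtain ⟨x, hxA, hx1⟩ := hBsub hp
    exact ⟨x.2, by rwa [← hx1, Prod.mk.eta]⟩
  have hBne : B.Nonempty :=
    Set.nonempty_iff_ne_empty.mpr fun h => hBc (h ▸ Set.countable_empty)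
  obtain ⟨p0, hp0⟩ := hBne
  have : Nonempty Q := ⟨(hwit p0 hp0).choose⟩
  choose! g hg using hwit
  -- g is injective on B
  have hginj : Set.InjOn g B := by
    intro p1 hp1 p2 hp2 hgeq
    by_contra hne
    obtain ⟨r, hr1, hr2⟩ := hBcompat p1 hp1 p2 hp2
    have hmemne : (p1, g p1) ≠ (p2, g p2) := fun h => hne (congrArg Prod.fst h)
    exact hA _ (hg p1 hp1) _ (hg p2 hp2) hmemne
      ⟨(r, g p1), ⟨hr1, le_rfl⟩, ⟨hr2, hgeq.le⟩⟩
  -- the image g '' B is an antichain in Q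
  have himg : (g '' B).Countable := by
    apply hccc
    rintro q1 ⟨p1, hp1, rfl⟩ q2 ⟨p2, hp2, rfl⟩ hne ⟨s, hs1, hs2⟩
    have hpne : p1 ≠ p2 := fun h => hne (by rw [h])
    obtain ⟨r, hr1, hr2⟩ := hBcompat p1 hp1 p2 hp2
    have hmemne : (p1, g p1) ≠ (p2, g p2) := fun h => hpne (congrArg Prod.fst h)
    exact hA _ (hg p1 hp1) _ (hg p2 hp2) hmemne ⟨(r, s), ⟨hr1, hs1⟩, ⟨hr2, hs2⟩⟩
  exact hBc (Set.countable_of_injective_of_countable_image hginj himg)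
end

section
/- Every linear order L of cardinality at most ℵ₁ admits an order embedding into P(ℕ)/Fin: there exists a map f : L → P(ℕ) such that for all a, b ∈ L, a ≤ b if and only if f(a) \ f(b) is finite. -/
open Set Function

private lemma fin_diff_trans {a b c : Set ℕ} (h1 : (a \ b).Finite) (h2 : (b \ c).Finite) :
    (a \ c).Finite :=
  (h1.union h2).subset fun x hx => by
    by_cases hb : x ∈ b
    · exact Or.inr ⟨hb, hx.2⟩
    · exact Or.inl ⟨hx.1, hb⟩

/-- extract an almost-increasing cofinal chain from a countable directed family -/
private lemma exists_chain (D : Set (Set ℕ)) (hD : D.Countable) (hne : D.Nonempty)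
    (hdir : ∀ a ∈ D, ∀ b ∈ D, ∃ c ∈ D, (a \ c).Finite ∧ (b \ c).Finite) :
    ∃ a : ℕ → Set ℕ, (∀ n, a n ∈ D) ∧ (∀ n, (a n \ a (n+1)).Finite) ∧
      ∀ s ∈ D, ∃ n, (s \ a n).Finite := by
  obtain ⟨d, hd⟩ := hD.exists_eq_range hne
  have hdmem : ∀ n, d n ∈ D := fun n => hd ▸ mem_range_self n
  have hdir' : ∀ (p q : {s // s ∈ D}), ∃ c : {s // s ∈ D},
      ((p : Set ℕ) \ c).Finite ∧ ((q : Set ℕ) \ c).Finite := by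
    rintro ⟨p, hp⟩ ⟨q, hq⟩
    obtain ⟨c, hc, h1, h2⟩ := hdir p hp q hq
    exact ⟨⟨c, hc⟩, h1, h2⟩
  choose g hg1 hg2 using hdir'
  let a : ℕ → {s // s ∈ D} := fun n => Nat.rec ⟨d 0, hdmem 0⟩
    (fun n s => g s ⟨d (n+1), hdmem (n+1)⟩) n
  have hstep : ∀ n, ((a n).1 \ (a (n+1)).1).Finite := by
    intro n
    exact hg1 (a n) ⟨d (n+1), hdmem (n+1)⟩
  refine ⟨fun n => (a n).1, fun n => (a n).2, hstep, ?_⟩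
  intro s hs
  rw [hd] at hs
  obtain ⟨k, rfl⟩ := hs
  cases k with
  | zero => exact ⟨0, by simp [a]⟩
  | succ k => exact ⟨k+1, hg2 (a k) ⟨d (k+1), hdmem (k+1)⟩⟩

/-- Strict interpolation in `P(ℕ)/fin` between a countable directed lower family and a
countable codirected upper family, assuming every upper element exceeds every lower element
by an infinite set. -/
private lemma interp (D U : Set (Set ℕ)) (hD : D.Countable) (hU : U.Countable)
    (hDne : D.Nonempty) (hUne : U.Nonempty)
    (hDdir : ∀ a ∈ D, ∀ b ∈ D, ∃ c ∈ D, (a \ c).Finite ∧ (b \ c).Finite)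
    (hUdir : ∀ a ∈ U, ∀ b ∈ U, ∃ c ∈ U, (c \ a).Finite ∧ (c \ b).Finite)
    (H : ∀ a ∈ D, ∀ b ∈ U, (a \ b).Finite ∧ (b \ a).Infinite) :
    ∃ c : Set ℕ, (∀ a ∈ D, (a \ c).Finite ∧ (c \ a).Infinite) ∧
                 (∀ b ∈ U, (c \ b).Finite ∧ (b \ c).Infinite) := by
  -- lower chain
  obtain ⟨a, haD, hastep, hacof⟩ := exists_chain D hD hDne hDdir
  -- upper chain via complements
  obtain ⟨b, hbU, hbstep, hbcoi⟩ : ∃ b : ℕ → Set ℕ, (∀ n, b n ∈ U) ∧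
      (∀ n, (b (n+1) \ b n).Finite) ∧ ∀ s ∈ U, ∃ n, (b n \ s).Finite := by
    have hdir2 : ∀ a ∈ compl '' U, ∀ b ∈ compl '' U, ∃ c ∈ compl '' U,
        (a \ c).Finite ∧ (b \ c).Finite := by
      rintro _ ⟨p, hp, rfl⟩ _ ⟨q, hq, rfl⟩
      obtain ⟨c, hc, h1, h2⟩ := hUdir p hp q hq
      exact ⟨cᶜ, ⟨c, hc, rfl⟩, by rw [compl_sdiff_compl]; exact h1,
        by rw [compl_sdiff_compl]; exact h2⟩
    obtain ⟨v, hv1, hv2, hv3⟩ := exists_chain (compl '' U) (hU.image _) (hUne.image _) hdir2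
    refine ⟨fun n => (v n)ᶜ, ?_, ?_, ?_⟩
    · intro n
      obtain ⟨s, hs, hsv⟩ := hv1 n
      show (v n)ᶜ ∈ U
      rwa [← hsv, compl_compl]
    · intro n
      show ((v (n+1))ᶜ \ (v n)ᶜ).Finite
      rw [compl_sdiff_compl]
      exact hv2 n
    · intro s hs
      obtain ⟨n, hn⟩ := hv3 sᶜ ⟨s, hs, rfl⟩
      refine ⟨n, ?_⟩
      show ((v n)ᶜ \ s).Finite
      have hvs : (v n)ᶜ \ s = sᶜ \ v n := by
        rw [← compl_compl (v n), compl_sdiff_compl, compl_compl]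
      rw [hvs]
      exact hn
  have hachain : ∀ k n, k ≤ n → (a k \ a n).Finite := by
    intro k n hkn
    induction n with
    | zero => simp_all
    | succ n ih =>
      rcases Nat.lt_or_ge k (n+1) with h | h
      · exact fin_diff_trans (ih (Nat.lt_succ_iff.mp h)) (hastep n)
      · have : k = n + 1 := le_antisymm hkn h
        subst this; simp
  have hbchain : ∀ k n, k ≤ n → (b n \ b k).Finite := by
    intro k n hkn
    induction n with
    | zero => simp_all
    | succ n ih =>
      rcases Nat.lt_or_ge k (n+1) with h | h
      · exact fin_diff_trans (hbstep n) (ih (Nat.lt_succ_iff.mp h))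
      · have : k = n + 1 := le_antisymm hkn h
        subst this; simp
  set A : ℕ → Set ℕ := fun n => ⋃ i ∈ Iic n, a i with hA
  set B : ℕ → Set ℕ := fun n => ⋂ j ∈ Iic n, b j with hB
  have hAmono : ∀ {m n : ℕ}, m ≤ n → A m ⊆ A n := fun {m n} hmn =>
    biUnion_subset_biUnion_left (Iic_subset_Iic.mpr hmn)
  have hBanti : ∀ {m n : ℕ}, m ≤ n → B n ⊆ B m := fun {m n} hmn =>
    biInter_subset_biInter_left (Iic_subset_Iic.mpr hmn)
  have haA : ∀ n, a n ⊆ A n := fun n => subset_biUnion_of_mem (mem_Iic.mpr le_rfl)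
  have hbB : ∀ n, B n ⊆ b n := fun n => biInter_subset_of_mem (mem_Iic.mpr le_rfl)
  have hAa : ∀ n, (A n \ a n).Finite := by
    intro n
    have hsub : A n \ a n ⊆ ⋃ i ∈ Iic n, (a i \ a n) := by
      rintro x ⟨hx1, hx2⟩
      simp only [mem_iUnion, A] at hx1 ⊢
      obtain ⟨i, hi, hxi⟩ := hx1
      exact ⟨i, hi, hxi, hx2⟩
    exact ((finite_Iic n).biUnion (fun i hi => hachain i n (mem_Iic.mp hi))).subset hsub
  have hbBfin : ∀ n, (b n \ B n).Finite := by
    intro n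
    have hsub : b n \ B n ⊆ ⋃ j ∈ Iic n, (b n \ b j) := by
      rintro x ⟨hx1, hx2⟩
      simp only [B, mem_iInter, not_forall, mem_iUnion] at hx2 ⊢
      obtain ⟨j, hj, hxj⟩ := hx2
      exact ⟨j, hj, hx1, hxj⟩
    exact ((finite_Iic n).biUnion (fun j hj => hbchain j n (mem_Iic.mp hj))).subset hsub
  have hAB : ∀ n m, (A n \ B m).Finite := by
    intro n m
    have hsub : A n \ B m ⊆ ⋃ i ∈ Iic n, ⋃ j ∈ Iic m, (a i \ b j) := by
      rintro x ⟨hx1, hx2⟩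
      simp only [mem_iUnion, A] at hx1 ⊢
      obtain ⟨i, hi, hxi⟩ := hx1
      simp only [B, mem_iInter, not_forall] at hx2
      obtain ⟨j, hj, hxj⟩ := hx2
      exact ⟨i, hi, j, hj, hxi, hxj⟩
    exact ((finite_Iic n).biUnion (fun i _ => (finite_Iic m).biUnion
      (fun j _ => (H _ (haD i) _ (hbU j)).1))).subset hsub
  have hBA : ∀ n, (B n \ A n).Infinite := by
    intro n
    have h2 : ((b n \ a n) \ ((b n \ B n) ∪ (A n \ a n))).Infinite :=
      ((H _ (haD n) _ (hbU n)).2).diff ((hbBfin n).union (hAa n))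
    refine h2.mono ?_
    rintro x ⟨⟨hxb, hxa⟩, hx2⟩
    simp only [mem_union, mem_diff, not_or, not_and, not_not] at hx2
    refine ⟨hx2.1 hxb, fun hxA => hxa (hx2.2 hxA)⟩
  -- choose a strictly monotone sequence of fresh points
  have hpick : ∀ n (k : ℕ), ∃ m ∈ B n \ A n, k < m := fun n k => (hBA n).exists_gt k
  choose pick hpick1 hpick2 using hpick
  set z : ℕ → ℕ := fun n => Nat.rec (pick 0 0) (fun n zn => pick (n+1) zn) n with hz
  have hzmem : ∀ n, z n ∈ B n \ A n := by
    intro n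
    cases n with
    | zero => exact hpick1 0 0
    | succ n => exact hpick1 (n+1) (z n)
  have hzmono : StrictMono z := strictMono_nat_of_lt_succ fun n => hpick2 (n+1) (z n)
  have hzmem' : ∀ m n, m ≤ n → z n ∈ B m \ A m := fun m n hmn =>
    ⟨hBanti hmn (hzmem n).1, fun hx => (hzmem n).2 (hAmono hmn hx)⟩
  set X : Set ℕ := range fun m => z (2*m) with hX
  set Y : Set ℕ := range fun m => z (2*m+1) with hY
  have hXYdisj : Disjoint X Y := by
    rw [disjoint_left]
    rintro x ⟨m, rfl⟩ ⟨m', he⟩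
    have he2 : z (2*m'+1) = z (2*m) := by exact he
    have := hzmono.injective (a₁ := 2*m'+1) (a₂ := 2*m) he2
    omega
  set c : Set ℕ := ((⋃ n, A n ∩ B n) \ Y) ∪ X with hc
  have hYA : ∀ k, (A k ∩ Y).Finite := by
    intro k
    have hsub : A k ∩ Y ⊆ z '' (Iio k) := by
      rintro x ⟨hx1, m, rfl⟩
      refine ⟨2*m+1, ?_, rfl⟩
      simp only [mem_Iio]
      by_contra h
      exact (hzmem' k (2*m+1) (by omega)).2 hx1
    exact ((finite_Iio k).image z).subset hsub
  refine ⟨c, ?_, ?_⟩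
  · intro s hs
    obtain ⟨k, hk⟩ := hacof s hs
    have hsA : (s \ A k).Finite := hk.subset (fun x hx => ⟨hx.1, fun h => hx.2 ((haA k) h)⟩)
    constructor
    · -- (s \ c).Finite
      have hsub : s \ c ⊆ (s \ A k) ∪ ((A k \ B k) ∪ (A k ∩ Y)) := by
        rintro x ⟨hxs, hxc⟩
        by_cases hA' : x ∈ A k
        · by_cases hB' : x ∈ B k
          · right; right
            refine ⟨hA', ?_⟩
            by_contra hxY
            exact hxc (Or.inl ⟨mem_iUnion.mpr ⟨k, hA', hB'⟩, hxY⟩)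
          · right; left; exact ⟨hA', hB'⟩
        · left; exact ⟨hxs, hA'⟩
      exact (hsA.union ((hAB k k).union (hYA k))).subset hsub
    · -- (c \ s).Infinite
      have hXs : (X ∩ s).Finite := by
        have hsub : X ∩ s ⊆ z '' (Iio (2*k)) ∪ (s \ A k) := by
          rintro x ⟨⟨m, rfl⟩, hxs⟩
          by_cases h2m : 2*m < 2*k
          · exact Or.inl ⟨2*m, mem_Iio.mpr h2m, rfl⟩
          · refine Or.inr ⟨hxs, fun hxA => ?_⟩
            exact (hzmem' k (2*m) (by omega)).2 hxA
        exact (((finite_Iio (2*k)).image z).union hsA).subset hsub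
      have hXinf : X.Infinite := infinite_range_of_injective
        (fun m m' h => by
          have h2 : z (2*m) = z (2*m') := by exact h
          have := hzmono.injective (a₁ := 2*m) (a₂ := 2*m') h2; omega)
      have : (X \ (X ∩ s)).Infinite := hXinf.diff hXs
      refine this.mono ?_
      rintro x ⟨hxX, hxns⟩
      exact ⟨Or.inr hxX, fun hxs => hxns ⟨hxX, hxs⟩⟩
  · intro s hs
    obtain ⟨k, hk⟩ := hbcoi s hs
    have hBs : (B k \ s).Finite := hk.subset (fun x hx => ⟨(hbB k) hx.1, hx.2⟩)
    constructor
    · -- (c \ s).Finite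
      have hsub : c \ s ⊆ ((A k \ B k) ∪ z '' (Iio (2*k))) ∪ (B k \ s) := by
        rintro x ⟨hxc, hxs⟩
        by_cases hB' : x ∈ B k
        · right; exact ⟨hB', hxs⟩
        · left
          rcases hxc with ⟨hxU, _⟩ | ⟨m, rfl⟩
          · obtain ⟨n, hxA, hxB⟩ := by simpa using mem_iUnion.mp hxU
            rcases Nat.lt_or_ge n k with h | h
            · exact Or.inl ⟨hAmono h.le hxA, hB'⟩
            · exact absurd (hBanti h hxB) hB'
          · refine Or.inr ⟨2*m, mem_Iio.mpr ?_, rfl⟩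
            by_contra h
            exact hB' (hzmem' k (2*m) (by omega)).1
      exact (((hAB k k).union ((finite_Iio (2*k)).image z)).union hBs).subset hsub
    · -- (s \ c).Infinite
      have hYc : Y ∩ c = ∅ := by
        ext x
        simp only [mem_inter_iff, mem_empty_iff_false, iff_false, not_and]
        rintro hxY (⟨_, hxY'⟩ | hxX)
        · exact hxY' hxY
        · exact hXYdisj.symm.ne_of_mem hxY hxX rfl
      have hYinf : Y.Infinite := infinite_range_of_injective
        (fun m m' h => by
          have h2 : z (2*m+1) = z (2*m'+1) := by exact h
          have := hzmono.injective (a₁ := 2*m+1) (a₂ := 2*m'+1) h2; omega)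
      have hfin : (z '' (Iio (2*k+1)) ∪ (B k \ s)).Finite :=
        ((finite_Iio (2*k+1)).image z).union hBs
      refine ((hYinf.diff hfin).mono ?_)
      rintro x ⟨⟨m, rfl⟩, hnot⟩
      simp only [mem_union, not_or] at hnot
      obtain ⟨hn1, hn2⟩ := hnot
      have hm : k ≤ 2*m+1 := by
        by_contra h
        exact hn1 ⟨2*m+1, mem_Iio.mpr (by omega), rfl⟩
      have hzB : z (2*m+1) ∈ B k := (hzmem' k (2*m+1) hm).1
      have hzs : z (2*m+1) ∈ s := by
        by_contra h
        exact hn2 ⟨hzB, h⟩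
      refine ⟨hzs, fun hxc => ?_⟩
      have : z (2*m+1) ∈ Y ∩ c := ⟨⟨m, rfl⟩, hxc⟩
      rw [hYc] at this
      exact this

private abbrev Wty : Type := (Cardinal.aleph 1).ord.ToType

private lemma Wty_wf : WellFounded ((· < ·) : Wty → Wty → Prop) :=
  IsWellFounded.wf

private lemma Wty_countable_Iio (i : Wty) : (Set.Iio i).Countable :=
  (Cardinal.countable_iff_lt_aleph_one _).mpr (Cardinal.mk_Iio_ord_toType i)

private lemma Wty_mk : Cardinal.mk Wty = Cardinal.aleph 1 :=
  Cardinal.mk_ord_toType _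

section Rec

variable {L : Type} [LinearOrder L] (e : L ↪ Wty)

omit [LinearOrder L] in
private lemma rel_wf : WellFounded (fun y x : L => e y < e x) :=
  InvImage.wf e Wty_wf

/-- the requirement on the value `c` chosen at stage `x`, given previous values `g` -/
private def spec (x : L) (g : ∀ y : L, e y < e x → Set ℕ) (c : Set ℕ) : Prop :=
  c.Infinite ∧ ((Set.univ : Set ℕ) \ c).Infinite ∧
  ∀ y (h : e y < e x),
    (y < x → (g y h \ c).Finite ∧ (c \ g y h).Infinite) ∧
    (x < y → (c \ g y h).Finite ∧ (g y h \ c).Infinite)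

open Classical in
private noncomputable def FF : L → Set ℕ :=
  (rel_wf e).fix fun x g => if h : ∃ c, spec e x g c then h.choose else ∅

open Classical in
private lemma FF_eq (x : L) :
    FF e x = if h : ∃ c, spec e x (fun y _ => FF e y) c then h.choose else ∅ := by
  have := (rel_wf e).fix_eq (fun x (g : ∀ y : L, e y < e x → Set ℕ) =>
    if h : ∃ c, spec e x g c then h.choose else ∅) x
  exact this

private def Key (x : L) : Prop := spec e x (fun y _ => FF e y) (FF e x)

private lemma key_all : ∀ x : L, Key e x := by
  intro x
  induction x using (rel_wf e).induction with
  | _ x IH =>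
  -- pairwise relations among earlier values
  have hpair : ∀ y y', e y < e x → e y' < e x → y < y' →
      (FF e y \ FF e y').Finite ∧ (FF e y' \ FF e y).Infinite := by
    intro y y' hy hy' hyy'
    rcases lt_trichotomy (e y) (e y') with h | h | h
    · exact ((IH y' hy').2.2 y h).1 hyy'
    · exact absurd (e.injective h) (ne_of_lt hyy')
    · exact ((IH y hy).2.2 y' h).2 hyy'
  set D : Set (Set ℕ) := insert ∅ (FF e '' {y | e y < e x ∧ y < x}) with hD
  set U : Set (Set ℕ) := insert Set.univ (FF e '' {y | e y < e x ∧ x < y}) with hU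
  have hcnt : ∀ P : L → Prop, ({y | e y < e x ∧ P y}).Countable := by
    intro P
    refine Set.Countable.mono (fun y hy => hy.1) ?_
    exact ((Wty_countable_Iio (e x)).preimage e.injective)
  have hDc : D.Countable := ((hcnt _).image _).insert _
  have hUc : U.Countable := ((hcnt _).image _).insert _
  have hDdir : ∀ a ∈ D, ∀ b ∈ D, ∃ c ∈ D, (a \ c).Finite ∧ (b \ c).Finite := by
    intro a ha b hb
    rcases ha with rfl | ⟨y, hy, rfl⟩
    · exact ⟨b, hb, by simp, by simp⟩
    rcases hb with rfl | ⟨y', hy', rfl⟩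
    · exact ⟨FF e y, Set.mem_insert_iff.mpr (Or.inr ⟨y, hy, rfl⟩), by simp, by simp⟩
    rcases lt_trichotomy y y' with h | rfl | h
    · exact ⟨FF e y', Set.mem_insert_iff.mpr (Or.inr ⟨y', hy', rfl⟩),
        (hpair y y' hy.1 hy'.1 h).1, by simp⟩
    · exact ⟨FF e y, Set.mem_insert_iff.mpr (Or.inr ⟨y, hy, rfl⟩), by simp, by simp⟩
    · exact ⟨FF e y, Set.mem_insert_iff.mpr (Or.inr ⟨y, hy, rfl⟩), by simp,
        (hpair y' y hy'.1 hy.1 h).1⟩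
  have hUdir : ∀ a ∈ U, ∀ b ∈ U, ∃ c ∈ U, (c \ a).Finite ∧ (c \ b).Finite := by
    intro a ha b hb
    rcases ha with rfl | ⟨y, hy, rfl⟩
    · exact ⟨b, hb, by simp, by simp⟩
    rcases hb with rfl | ⟨y', hy', rfl⟩
    · exact ⟨FF e y, Set.mem_insert_iff.mpr (Or.inr ⟨y, hy, rfl⟩), by simp, by simp⟩
    rcases lt_trichotomy y y' with h | rfl | h
    · exact ⟨FF e y, Set.mem_insert_iff.mpr (Or.inr ⟨y, hy, rfl⟩), by simp,
        (hpair y y' hy.1 hy'.1 h).1⟩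
    · exact ⟨FF e y, Set.mem_insert_iff.mpr (Or.inr ⟨y, hy, rfl⟩), by simp, by simp⟩
    · exact ⟨FF e y', Set.mem_insert_iff.mpr (Or.inr ⟨y', hy', rfl⟩),
        (hpair y' y hy'.1 hy.1 h).1, by simp⟩
  have hH : ∀ a ∈ D, ∀ b ∈ U, (a \ b).Finite ∧ (b \ a).Infinite := by
    intro a ha b hb
    rcases ha with rfl | ⟨y, hy, rfl⟩
    · rcases hb with rfl | ⟨y', hy', rfl⟩
      · refine ⟨by simp, ?_⟩
        rw [Set.diff_empty]
        exact Set.infinite_univ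
      · refine ⟨by simp, ?_⟩
        rw [Set.diff_empty]
        exact (IH y' hy'.1).1
    · rcases hb with rfl | ⟨y', hy', rfl⟩
      · exact ⟨by simp, (IH y hy.1).2.1⟩
      · exact hpair y y' hy.1 hy'.1 (lt_trans hy.2 hy'.2)
  obtain ⟨c, hcD, hcU⟩ := interp D U hDc hUc ⟨∅, Set.mem_insert _ _⟩
    ⟨Set.univ, Set.mem_insert _ _⟩ hDdir hUdir hH
  have hex : ∃ c, spec e x (fun y _ => FF e y) c := by
    refine ⟨c, ?_, (hcU Set.univ (Set.mem_insert _ _)).2, ?_⟩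
    · have := (hcD ∅ (Set.mem_insert _ _)).2
      rwa [Set.diff_empty] at this
    · intro y h
      constructor
      · intro hyx
        exact hcD (FF e y) (Set.mem_insert_iff.mpr (Or.inr ⟨y, ⟨h, hyx⟩, rfl⟩))
      · intro hxy
        exact hcU (FF e y) (Set.mem_insert_iff.mpr (Or.inr ⟨y, ⟨h, hxy⟩, rfl⟩))
  have hFx : FF e x = hex.choose := by
    rw [FF_eq]
    exact dif_pos hex
  show spec e x (fun y _ => FF e y) (FF e x)
  rw [hFx]
  exact hex.choose_spec

end Rec

/-- Every linear order `L` of cardinality at most `ℵ₁` admits an order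
embedding into `P(ℕ)/Fin`: there is `f : L → P(ℕ)` with `a ≤ b` iff `f(a) \ f(b)` finite. -/
theorem stmt_17 (L : Type) [LinearOrder L] (hL : Cardinal.mk L ≤ Cardinal.aleph 1) :
    ∃ f : L → Set ℕ, ∀ a b : L, a ≤ b ↔ (f a \ f b).Finite := by
  have hle : Cardinal.mk L ≤ Cardinal.mk Wty := by rw [Wty_mk]; exact hL
  obtain ⟨e⟩ := (Cardinal.le_def L Wty).mp hle
  have key := key_all e
  have hpair : ∀ a b : L, a < b → (FF e a \ FF e b).Finite ∧ (FF e b \ FF e a).Infinite := by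
    intro a b hab
    rcases lt_trichotomy (e a) (e b) with h | h | h
    · exact ((key b).2.2 a h).1 hab
    · exact absurd (e.injective h) (ne_of_lt hab)
    · exact ((key a).2.2 b h).2 hab
  refine ⟨FF e, fun a b => ⟨?_, ?_⟩⟩
  · intro hab
    rcases lt_or_eq_of_le hab with h | rfl
    · exact (hpair a b h).1
    · simp
  · intro h
    by_contra hab
    exact (hpair b a (lt_of_not_ge hab)).2 h
end
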